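/- Let κ_1 > κ_2 ≥ ... ≥ κ_n > 0 with κ_{l+1} ≤ δ' κ_1 for some 1 ≤ l ≤ k−1 and δ' ∈ (0,1). Then κ_1 · σ_{l-1}(κ|1)/σ_l(κ) ≥ 1 − C δ', where C depends only on n and l. -/

import Mathlib

/-!
Since `σ_l(κ) = κ_1 σ_{l-1}(κ|1) + σ_l(κ|1)`, it suffices to show `σ_l(κ|1) ≤ C δ' σ_l(κ)`.
A summand `∏_{i ∈ t} κ_i` of `σ_l(κ|1)` has `l` indices, all `≥ 2`, so its largest index `m` is
at least `l + 1` and `κ_m ≤ κ_{l+1} ≤ δ' κ_1`. Replacing `κ_m` by `κ_1` turns it into a summand of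
`σ_l(κ)`, so each of the `C(n-1, l)` summands of `σ_l(κ|1)` is at most `δ' σ_l(κ)`.
-/

open Finset

/-- The `k`-th elementary symmetric polynomial of `κ : Fin n → ℝ`. -/
noncomputable def esymm (n k : ℕ) (κ : Fin n → ℝ) : ℝ :=
  ∑ s ∈ Finset.univ.powersetCard k, ∏ i ∈ s, κ i

/-- `σ_k(κ|p)`: elementary symmetric polynomial with the `p`-th entry deleted. -/
noncomputable def esymmDel (n k : ℕ) (κ : Fin n → ℝ) (p : Fin n) : ℝ :=
  ∑ s ∈ (Finset.univ.erase p).powersetCard k, ∏ i ∈ s, κ i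

/-- `σ_k(κ|pq)`: elementary symmetric polynomial with the `p`-th and `q`-th entries deleted. -/
noncomputable def esymmDel2 (n k : ℕ) (κ : Fin n → ℝ) (p q : Fin n) : ℝ :=
  ∑ s ∈ ((Finset.univ.erase p).erase q).powersetCard k, ∏ i ∈ s, κ i

theorem Finset.sum_powersetCard_succ_insert_prod {ι R : Type*} [DecidableEq ι] [CommSemiring R]
    {s : Finset ι} {a : ι} (ha : a ∉ s) (k : ℕ) (f : ι → R) :
    ∑ t ∈ (insert a s).powersetCard (k + 1), ∏ i ∈ t, f i =
      f a * ∑ t ∈ s.powersetCard k, ∏ i ∈ t, f i + ∑ t ∈ s.powersetCard (k + 1), ∏ i ∈ t, f i := by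
  have hnotMem : ∀ j, ∀ t ∈ s.powersetCard j, a ∉ t :=
    fun _ t ht hat => ha ((mem_powersetCard.1 ht).1 hat)
  have hdisj : Disjoint (s.powersetCard (k + 1)) ((s.powersetCard k).image (insert a)) := by
    refine disjoint_left.2 fun t ht ht' => ?_
    obtain ⟨u, -, rfl⟩ := mem_image.1 ht'
    exact hnotMem _ _ ht (mem_insert_self a u)
  have hinj : Set.InjOn (insert a) (s.powersetCard k : Set (Finset ι)) :=
    fun t ht u hu htu => by
      rw [← erase_insert (hnotMem k t ht), htu, erase_insert (hnotMem k u hu)]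
  rw [powersetCard_succ_insert ha, sum_union hdisj, sum_image hinj, mul_sum, add_comm]
  exact congrArg (· + _) (sum_congr rfl fun t ht => prod_insert (hnotMem k t ht))

theorem esymm_eq_mul_esymmDel_add {n l : ℕ} (hl : 1 ≤ l) (κ : Fin n → ℝ) (a : Fin n) :
    esymm n l κ = κ a * esymmDel n (l - 1) κ a + esymmDel n l κ a := by
  obtain ⟨k, rfl⟩ : ∃ k, l = k + 1 := ⟨l - 1, by omega⟩
  have h := sum_powersetCard_succ_insert_prod (notMem_erase a univ) k κ
  rw [insert_erase (mem_univ a)] at h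
  simpa only [esymm, esymmDel, Nat.add_sub_cancel] using h

theorem esymm_pos {n k : ℕ} (hkn : k ≤ n) {κ : Fin n → ℝ} (hκ : ∀ i, 0 < κ i) :
    0 < esymm n k κ :=
  sum_pos (fun _ _ => prod_pos fun i _ => hκ i) (powersetCard_nonempty.2 (by simpa using hkn))

theorem Fin.card_le_val_max' {n : ℕ} {t : Finset (Fin n)} (ht : t.Nonempty)
    (h0 : ∀ i ∈ t, i.val ≠ 0) : #t ≤ (t.max' ht).val := by
  have hsub : t.map Fin.valEmbedding ⊆ Ioc 0 (t.max' ht).val := by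
    intro x hx
    obtain ⟨i, hi, rfl⟩ := mem_map.1 hx
    exact mem_Ioc.2 ⟨Nat.pos_of_ne_zero (h0 i hi), t.le_max' i hi⟩
  simpa using card_le_card hsub

section Antitone

variable {n l : ℕ} (hl : 1 ≤ l) (hln : l < n) {κ : Fin n → ℝ} (hκ : 0 ≤ κ) (hanti : Antitone κ)
  {δ : ℝ} (hδ0 : 0 ≤ δ) (hδ : κ ⟨l, hln⟩ ≤ δ * κ ⟨0, by omega⟩)
include hl hκ hanti hδ0 hδ

theorem prod_le_mul_esymm {t : Finset (Fin n)}
    (ht : t ∈ (univ.erase ⟨0, by omega⟩).powersetCard l) :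
    ∏ i ∈ t, κ i ≤ δ * esymm n l κ := by
  obtain ⟨hsub, hcard⟩ := mem_powersetCard.1 ht
  have hne : t.Nonempty := card_pos.1 (by omega)
  have h0 : ∀ i ∈ t, i.val ≠ 0 := fun i hi h => (mem_erase.1 (hsub hi)).1 (Fin.ext h)
  set m := t.max' hne
  have hm : κ m ≤ δ * κ ⟨0, by omega⟩ :=
    (hanti (Fin.le_def.2 (hcard ▸ Fin.card_le_val_max' hne h0))).trans hδ
  have h0m : (⟨0, by omega⟩ : Fin n) ∉ t.erase m := fun h => h0 _ (mem_of_mem_erase h) rfl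
  have hu : insert ⟨0, by omega⟩ (t.erase m) ∈ univ.powersetCard l := by
    rw [mem_powersetCard, card_insert_of_notMem h0m, card_erase_of_mem (t.max'_mem hne)]
    exact ⟨subset_univ _, by omega⟩
  have hprod_nonneg : ∀ s : Finset (Fin n), 0 ≤ ∏ i ∈ s, κ i := fun s => prod_nonneg fun i _ => hκ i
  calc ∏ i ∈ t, κ i = κ m * ∏ i ∈ t.erase m, κ i := (mul_prod_erase t κ (t.max'_mem hne)).symm
    _ ≤ δ * κ ⟨0, by omega⟩ * ∏ i ∈ t.erase m, κ i := mul_le_mul_of_nonneg_right hm (hprod_nonneg _)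
    _ = δ * ∏ i ∈ insert ⟨0, by omega⟩ (t.erase m), κ i := by rw [prod_insert h0m, mul_assoc]
    _ ≤ δ * esymm n l κ :=
      mul_le_mul_of_nonneg_left (single_le_sum (fun s _ => hprod_nonneg s) hu) hδ0

theorem esymmDel_zero_le_mul_esymm :
    esymmDel n l κ ⟨0, by omega⟩ ≤ (n - 1).choose l * δ * esymm n l κ := by
  refine (sum_le_card_nsmul _ _ _ fun t ht =>
    prod_le_mul_esymm hl hln hκ hanti hδ0 hδ ht).trans_eq ?_
  rw [card_powersetCard, card_erase_of_mem (mem_univ _), card_univ, Fintype.card_fin,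
    nsmul_eq_mul, mul_assoc]

end Antitone

/-- κ₁·σ_{l-1}(κ|1)/σ_l(κ) ≥ 1 − Cδ' when κ_{l+1} ≤ δ'κ₁. -/
theorem quotient_lower_bound (n l : ℕ) (hl : 1 ≤ l) :
    ∃ C : ℝ, 0 < C ∧ ∀ (k : ℕ) (hlk : l ≤ k - 1) (hkn : k ≤ n),
      ∀ κ : Fin n → ℝ, (∀ i, 0 < κ i) →
      (∀ i j : Fin n, i ≤ j → κ j ≤ κ i) →
      (∀ p : Fin n, p ≠ ⟨0, by omega⟩ → κ p < κ ⟨0, by omega⟩) →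
      ∀ δ' : ℝ, 0 < δ' → δ' < 1 →
      κ ⟨l, by omega⟩ ≤ δ' * κ ⟨0, by omega⟩ →
      1 - C * δ' ≤ κ ⟨0, by omega⟩ * esymmDel n (l - 1) κ ⟨0, by omega⟩ / esymm n l κ := by
  refine ⟨(n - 1).choose l + 1, by positivity, ?_⟩
  intro k hlk hkn κ hpos hanti _ δ' hδ0 _ hδ
  have hE := esymm_pos (by omega : l ≤ n) hpos
  have hD := esymmDel_zero_le_mul_esymm hl (by omega) (fun i => (hpos i).le) hanti hδ0.le hδ
  have hsplit := esymm_eq_mul_esymmDel_add hl κ ⟨0, by omega⟩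
  rw [le_div_iff₀ hE]
  nlinarith
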